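/- arXiv:2112.02354 — 4 statements merged into one kernel-verified Lean document; each statement's English description precedes it below -/
import Mathlib

section
/- Let φ(s) : [0,∞) → [0,∞) be a non-increasing function satisfying s'·φ(s+s') ≤ C·φ(s)^{1+a} for all s, s' ≥ 0, where C > 0 and a > 0 are constants. If C·φ(0)^a < 1/2, then φ(s) = 0 for all s > S∞, where S∞ = 2C·φ(0)^a/(1 - 2^{-a}). -/
/-- De Giorgi-type iteration lemma. -/
theorem stmt_0 (φ : ℝ → ℝ) (C a : ℝ) (hC : 0 < C) (ha : 0 < a)
    (hnn : ∀ s, 0 ≤ s → 0 ≤ φ s)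
    (hmono : ∀ s t, 0 ≤ s → s ≤ t → φ t ≤ φ s)
    (hrec : ∀ s s', 0 ≤ s → 0 ≤ s' → s' * φ (s + s') ≤ C * φ s ^ (1 + a))
    (hsmall : C * φ 0 ^ a < 1 / 2) :
    ∀ s, 2 * C * φ 0 ^ a / (1 - 2 ^ (-a)) < s → φ s = 0 := by
  intro s hs
  have hφ0 : 0 ≤ φ 0 := hnn 0 le_rfl
  have hr0 : (0:ℝ) < (2:ℝ) ^ (-a) := Real.rpow_pos_of_pos (by norm_num) _
  have hr1 : (2:ℝ) ^ (-a) < 1 :=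
    Real.rpow_lt_one_of_one_lt_of_neg (by norm_num) (by linarith)
  set r : ℝ := (2:ℝ) ^ (-a) with hrdef
  have h1r : (0:ℝ) < 1 - r := by linarith
  by_cases hz : φ 0 = 0
  · -- then S∞ = 0 and φ s ≤ φ 0 = 0
    have hS : 2 * C * φ 0 ^ a / (1 - r) = 0 := by
      rw [hz, Real.zero_rpow ha.ne']; ring
    rw [hS] at hs
    have := hmono 0 s le_rfl hs.le
    have := hnn s hs.le
    linarith [this, hmono 0 s le_rfl hs.le, hz ▸ hmono 0 s le_rfl hs.le]
  · have hφ0' : 0 < φ 0 := lt_of_le_of_ne hφ0 (Ne.symm hz)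
    have hφa : 0 < φ 0 ^ a := Real.rpow_pos_of_pos hφ0' a
    set D : ℝ := 2 * C * φ 0 ^ a with hDdef
    have hD : 0 < D := by positivity
    set sN : ℕ → ℝ := fun n => ∑ k ∈ Finset.range n, D * r ^ k with hsN
    have hsN0 : ∀ n, 0 ≤ sN n := fun n =>
      Finset.sum_nonneg fun k _ => by positivity
    have hsNle : ∀ n, sN n ≤ D / (1 - r) := by
      intro n
      have hgeom : ∑ k ∈ Finset.range n, r ^ k ≤ 1 / (1 - r) := by
        rw [geom_sum_eq hr1.ne]
        have heq : (r ^ n - 1) / (r - 1) = (1 - r ^ n) / (1 - r) := by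
          rw [div_eq_div_iff (sub_ne_zero.mpr hr1.ne) h1r.ne']
          ring
        rw [heq, div_le_div_iff₀ h1r h1r]
        have : 0 ≤ r ^ n := by positivity
        nlinarith
      calc sN n = D * ∑ k ∈ Finset.range n, r ^ k := by
            rw [hsN]; rw [Finset.mul_sum]
        _ ≤ D * (1 / (1 - r)) := by
            exact mul_le_mul_of_nonneg_left hgeom hD.le
        _ = D / (1 - r) := by ring
    -- key induction
    have hhalf : ((1:ℝ)/2) ^ a = r := by
      rw [hrdef, one_div, Real.inv_rpow (by norm_num : (0:ℝ) ≤ 2),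
        ← Real.rpow_neg (by norm_num : (0:ℝ) ≤ 2)]
    have key : ∀ n : ℕ, φ (sN n) ≤ φ 0 * (1/2) ^ n := by
      intro n
      induction n with
      | zero => simp [hsN]
      | succ n ih =>
        have hstep : sN (n + 1) = sN n + D * r ^ n := by
          rw [hsN]; exact Finset.sum_range_succ _ n
        have hd : 0 < D * r ^ n := by positivity
        have hrec' := hrec (sN n) (D * r ^ n) (hsN0 n) hd.le
        rw [← hstep] at hrec'
        -- φ (sN (n+1)) ≤ C * φ (sN n) ^ (1+a) / (D * r^n)
        have hφn : 0 ≤ φ (sN n) := hnn _ (hsN0 n)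
        have hpow : φ (sN n) ^ (1 + a) ≤ (φ 0 * (1/2) ^ n) ^ (1 + a) :=
          Real.rpow_le_rpow hφn ih (by linarith)
        have hbig : C * (φ 0 * (1/2) ^ n) ^ (1 + a)
            = D * r ^ n * (φ 0 * (1/2) ^ (n+1)) := by
          have h2 : ((1/2:ℝ) ^ n) ^ (1 + a)
              = (1/2) ^ n * ((1/2:ℝ) ^ a) ^ n := by
            rw [← Real.rpow_natCast ((1/2:ℝ)) n, ← Real.rpow_mul (by norm_num : (0:ℝ) ≤ 1/2),
              mul_add, mul_one, Real.rpow_add (by norm_num : (0:ℝ) < 1/2),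
              ← Real.rpow_natCast ((1/2:ℝ)^a) n, ← Real.rpow_mul (by positivity), mul_comm a]
          have hφ1a : φ 0 ^ (1 + a) = φ 0 * φ 0 ^ a := by
            rw [Real.rpow_add hφ0', Real.rpow_one]
          rw [Real.mul_rpow hφ0 (by positivity), h2, hφ1a, hDdef, ← hhalf]
          ring
        have hle : C * φ (sN n) ^ (1 + a) ≤ D * r ^ n * (φ 0 * (1/2) ^ (n+1)) := by
          rw [← hbig]
          exact mul_le_mul_of_nonneg_left hpow hC.le
        have := le_trans hrec' hle
        exact le_of_mul_le_mul_left (by linarith [this]) hd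
    -- conclude
    have hub : ∀ n : ℕ, φ s ≤ φ 0 * (1/2) ^ n := by
      intro n
      exact le_trans (hmono (sN n) s (hsN0 n) (le_trans (hsNle n) hs.le)) (key n)
    have hφs : 0 ≤ φ s := hnn s (le_trans (le_trans (hsN0 0) (le_trans (hsNle 0) hs.le)) le_rfl)
    by_contra hne
    have hpos : 0 < φ s := lt_of_le_of_ne hφs (Ne.symm hne)
    obtain ⟨n, hn⟩ := exists_pow_lt_of_lt_one (div_pos hpos hφ0') (by norm_num : (1/2:ℝ) < 1)
    have : φ 0 * (1/2) ^ n < φ s := by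
      rw [lt_div_iff₀ hφ0'] at hn
      linarith [hn]
    linarith [hub n]
end

section
/- For a > 0 and p < a + 1, the function e^{F̃}(z) = a(a+1) / (|z|² (-log |z|²)^{a+2}) defined on the disk D = {z ∈ ℂ : |z| < 1/2} satisfies ∫_D e^{F̃} |F̃|^p dA < ∞, where dA is Lebesgue measure on ℂ; i.e., e^{F̃} ∈ L¹(log L)^p(D). Moreover, e^{F̃} ∉ L^q(D) for any q > 1. -/
/-!
Polar coordinates and the substitution `‖z‖ = e^{-x}` turn integrability of a radial function
`g ‖z‖` over the disk `‖z‖ < 1/2` into integrability of `e^{-2x} g(e^{-x})` on `(log 2, ∞)`.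
There `e^{F̃} = a(a+1) e^{2x} / (2x)^{a+2}`, so `e^{-2x} e^{F̃} = a(a+1) / (2x)^{a+2}` while
`|F̃| = O(x)`: the first integrand is `O(x^{p-a-2})`, integrable since `p < a + 1`. For the `q`-th
power, `e^{-2x} e^{qF̃} = (a(a+1))^q e^{2(q-1)x} / (2x)^{(a+2)q} → ∞`.
-/

open MeasureTheory Set Real Filter

section Radial

variable {E F : Type*} [NormedAddCommGroup E] [NormedSpace ℝ E] [Nontrivial E]
  [FiniteDimensional ℝ E] [MeasurableSpace E] [BorelSpace E]
  [NormedAddCommGroup F] [NormedSpace ℝ F] (μ : Measure E) [μ.IsAddHaarMeasure]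

lemma integrableOn_ball_zero_fun_norm_iff {f : ℝ → F} {R : ℝ} :
    IntegrableOn (fun x => f ‖x‖) (Metric.ball 0 R) μ ↔
      IntegrableOn (fun r : ℝ => r ^ (Module.finrank ℝ E - 1) • f r) (Ioo 0 R) := by
  have hball : (Metric.ball (0 : E) R).indicator (fun x => f ‖x‖) =
      fun x => (Iio R).indicator f ‖x‖ := by
    ext x; simp only [indicator, Metric.mem_ball, dist_zero_right, mem_Iio]
  have hsmul : (fun r : ℝ => r ^ (Module.finrank ℝ E - 1) • (Iio R).indicator f r) =
      (Iio R).indicator (fun r => r ^ (Module.finrank ℝ E - 1) • f r) := by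
    ext r; simp only [indicator, mem_Iio]; split_ifs <;> simp
  rw [← integrable_indicator_iff measurableSet_ball, hball, integrable_fun_norm_addHaar, hsmul,
    IntegrableOn, integrable_indicator_iff measurableSet_Iio, IntegrableOn,
    Measure.restrict_restrict measurableSet_Iio, inter_comm, Ioi_inter_Iio]
  rfl

end Radial

lemma integrableOn_Ioo_exp_neg_iff {f : ℝ → ℝ} (c : ℝ) :
    IntegrableOn f (Ioo 0 (exp (-c))) ↔
      IntegrableOn (fun x => exp (-x) * f (exp (-x))) (Ioi c) := by
  have himage : (fun x => exp (-x)) '' Ioi c = Ioo 0 (exp (-c)) := by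
    ext y
    constructor
    · rintro ⟨x, hx, rfl⟩
      exact ⟨exp_pos _, exp_lt_exp.2 (neg_lt_neg hx)⟩
    · rintro ⟨hy₀, hy⟩
      refine ⟨-log y, ?_, by simp [exp_log hy₀]⟩
      rw [mem_Ioi, lt_neg, ← log_exp (-c)]
      exact log_lt_log hy₀ hy
  rw [← himage, integrableOn_image_iff_integrableOn_abs_deriv_smul measurableSet_Ioi
    (fun x _ => ((hasDerivAt_neg x).exp).hasDerivWithinAt) (exp_injective.comp neg_injective).injOn]
  simp [abs_of_pos (exp_pos _)]

lemma integrableOn_norm_lt_exp_neg_iff {g : ℝ → ℝ} (c : ℝ) :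
    IntegrableOn (fun z : ℂ => g ‖z‖) {z | ‖z‖ < exp (-c)} ↔
      IntegrableOn (fun x => exp (-(2 * x)) * g (exp (-x))) (Ioi c) := by
  rw [← ball_zero_eq, integrableOn_ball_zero_fun_norm_iff, integrableOn_Ioo_exp_neg_iff,
    Complex.finrank_real_complex]
  refine integrableOn_congr_fun (fun x _ => ?_) measurableSet_Ioi
  rw [pow_one, smul_eq_mul, ← mul_assoc, ← exp_add, two_mul, neg_add]

lemma not_integrableOn_Ioi_of_tendsto_atTop {f : ℝ → ℝ} (hf : Tendsto f atTop atTop) (c : ℝ) :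
    ¬ IntegrableOn f (Ioi c) := by
  intro hint
  obtain ⟨M, hM⟩ := eventually_atTop.1 (hf.eventually_ge_atTop 1)
  have hone : IntegrableOn (fun _ => (1 : ℝ)) (Ioi (max M c)) := by
    refine (hint.mono_set (Ioi_subset_Ioi (le_max_right M c))).mono' (by fun_prop) ?_
    rw [ae_restrict_iff' measurableSet_Ioi]
    refine .of_forall fun x hx => ?_
    have h1 : 1 ≤ f x := hM x ((le_max_left M c).trans hx.le)
    rwa [norm_one]
  simp [integrableOn_const_iff] at hone

lemma abs_add_sub_mul_log_le {c b t : ℝ} (hb : 0 ≤ b) (ht : 1 ≤ t) :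
    |c + t - b * log t| ≤ (|c| + b + 1) * t := by
  have hlog₀ : 0 ≤ log t := log_nonneg ht
  have hlog : b * log t ≤ b * t := mul_le_mul_of_nonneg_left (log_le_self (by linarith)) hb
  have hc : |c| ≤ |c| * t := le_mul_of_one_le_right (abs_nonneg c) ht
  rw [abs_le]
  constructor <;> nlinarith [abs_nonneg c, neg_abs_le c, le_abs_self c, mul_nonneg hb hlog₀]

noncomputable def expFTilde (a r : ℝ) : ℝ :=
  a * (a + 1) / (r ^ 2 * (-log (r ^ 2)) ^ (a + 2))

lemma expFTilde_exp_neg (a x : ℝ) :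
    expFTilde a (exp (-x)) = a * (a + 1) * exp (2 * x) / (2 * x) ^ (a + 2) := by
  rw [expFTilde, ← exp_nat_mul, Nat.cast_ofNat, log_exp, mul_neg, neg_neg, exp_neg]
  field_simp

lemma exp_neg_two_mul_mul_expFTilde_exp_neg (a x : ℝ) :
    exp (-(2 * x)) * expFTilde a (exp (-x)) = a * (a + 1) / (2 * x) ^ (a + 2) := by
  rw [expFTilde_exp_neg, exp_neg]
  field_simp

lemma log_expFTilde_exp_neg {a x : ℝ} (ha : 0 < a) (hx : 0 < x) :
    log (expFTilde a (exp (-x))) = log (a * (a + 1)) + 2 * x - (a + 2) * log (2 * x) := by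
  rw [expFTilde_exp_neg, log_div (by positivity) (by positivity),
    log_mul (by positivity) (exp_ne_zero _), log_exp, log_rpow (by positivity)]

lemma exp_neg_two_mul_mul_expFTilde_exp_neg_rpow {a x : ℝ} (q : ℝ) (ha : 0 ≤ a) (hx : 0 < x) :
    exp (-(2 * x)) * expFTilde a (exp (-x)) ^ q =
      (a * (a + 1)) ^ q * (exp ((q - 1) * (2 * x)) / (2 * x) ^ ((a + 2) * q)) := by
  rw [expFTilde_exp_neg, div_rpow (by positivity) (by positivity),
    mul_rpow (by positivity) (exp_pos _).le, ← exp_mul, ← rpow_mul (by positivity),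
    mul_div_assoc, mul_left_comm, ← mul_div_assoc, ← exp_add]
  ring_nf

lemma one_half_eq_exp_neg_log_two : (1 / 2 : ℝ) = exp (-log 2) := by
  rw [exp_neg, exp_log two_pos, one_div]

lemma integrableOn_expFTilde_mul_abs_log_rpow {a p : ℝ} (ha : 0 < a) (hp : 0 ≤ p)
    (hpa : p < a + 1) :
    IntegrableOn (fun z : ℂ => expFTilde a ‖z‖ * |log (expFTilde a ‖z‖)| ^ p)
      {z : ℂ | ‖z‖ < 1 / 2} := by
  rw [one_half_eq_exp_neg_log_two,
    integrableOn_norm_lt_exp_neg_iff (g := fun r => expFTilde a r * |log (expFTilde a r)| ^ p)]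
  set A := a * (a + 1)
  set C := |log A| + (a + 2) + 1
  have hmajorant : IntegrableOn (fun x => A * C ^ p * 2 ^ (p - (a + 2)) * x ^ (p - (a + 2)))
      (Ioi (log 2)) :=
    (integrableOn_Ioi_rpow_of_lt (by linarith) (log_pos one_lt_two)).const_mul _
  refine hmajorant.mono' (by unfold expFTilde; fun_prop) ?_
  rw [ae_restrict_iff' measurableSet_Ioi]
  refine .of_forall fun x (hx : log 2 < x) => ?_
  have hx₀ : 0 < x := (log_pos one_lt_two).trans hx
  have htwo_x : 1 ≤ 2 * x := by linarith [log_two_gt_d9]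
  rw [← mul_assoc, exp_neg_two_mul_mul_expFTilde_exp_neg, log_expFTilde_exp_neg ha hx₀,
    norm_of_nonneg (by positivity)]
  calc A / (2 * x) ^ (a + 2) * |log A + 2 * x - (a + 2) * log (2 * x)| ^ p
      ≤ A / (2 * x) ^ (a + 2) * (C * (2 * x)) ^ p := by
        gcongr
        exact abs_add_sub_mul_log_le (by linarith) htwo_x
    _ = A * C ^ p * 2 ^ (p - (a + 2)) * x ^ (p - (a + 2)) := by
        rw [mul_rpow (by positivity : 0 ≤ C) (by positivity), mul_rpow zero_le_two hx₀.le,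
          mul_rpow zero_le_two hx₀.le, rpow_sub two_pos, rpow_sub hx₀]
        field_simp

lemma not_integrableOn_expFTilde_rpow {a q : ℝ} (ha : 0 < a) (hq : 1 < q) :
    ¬ IntegrableOn (fun z : ℂ => expFTilde a ‖z‖ ^ q) {z : ℂ | ‖z‖ < 1 / 2} := by
  rw [one_half_eq_exp_neg_log_two, integrableOn_norm_lt_exp_neg_iff (g := (expFTilde a · ^ q))]
  refine not_integrableOn_Ioi_of_tendsto_atTop ?_ _
  have hgrowth : Tendsto (fun x => (a * (a + 1)) ^ q *
      (exp ((q - 1) * (2 * x)) / (2 * x) ^ ((a + 2) * q))) atTop atTop :=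
    ((tendsto_exp_mul_div_rpow_atTop _ _ (by linarith)).comp
      (tendsto_id.const_mul_atTop two_pos)).const_mul_atTop (by positivity)
  refine hgrowth.congr' ?_
  filter_upwards [eventually_gt_atTop 0] with x hx
  exact (exp_neg_two_mul_mul_expFTilde_exp_neg_rpow q ha.le hx).symm

/-- e^{F̃}(z) = a(a+1)/(|z|²(-log|z|²)^{a+2}) belongs to L¹(log L)^p on the disk of
radius 1/2 for p < a+1, but to no L^q with q > 1. -/
theorem stmt_5 (a p : ℝ) (ha : 0 < a) (hp : 0 < p) (hpa : p < a + 1) :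
    IntegrableOn
      (fun z : ℂ =>
        (a * (a + 1) / (‖z‖ ^ 2 * (-Real.log (‖z‖ ^ 2)) ^ (a + 2))) *
          |Real.log (a * (a + 1) /
            (‖z‖ ^ 2 * (-Real.log (‖z‖ ^ 2)) ^ (a + 2)))| ^ p)
      {z : ℂ | ‖z‖ < 1/2} volume ∧
    ∀ q : ℝ, 1 < q →
      ¬ IntegrableOn
        (fun z : ℂ =>
          (a * (a + 1) /
            (‖z‖ ^ 2 * (-Real.log (‖z‖ ^ 2)) ^ (a + 2))) ^ q)
        {z : ℂ | ‖z‖ < 1/2} volume :=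
  ⟨integrableOn_expFTilde_mul_abs_log_rpow ha hp.le hpa,
    fun _ hq => not_integrableOn_expFTilde_rpow ha hq⟩
end

section
/- For a > 0, the function φ(z) = (-log |z|²)^{-a} on the disk {|z| ≤ 1/2}, extended by φ(0) = 0, is continuous and satisfies the modulus of continuity estimate |φ(z) - φ(w)| ≤ C/|log |z - w||^a for all z, w with |z|, |w| ≤ 1/4 and z ≠ w, for some constant C depending only on a. However, φ is not Hölder continuous: for every β ∈ (0,1) and every C > 0 there exist z, w in the disk with |φ(z) - φ(w)| > C|z-w|^β. -/
/-! With `u = r²`, `φ` is `logPow a u = (-log u)^(-a)` evaluated at `u = ‖z‖²`; the junk value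
`0 ^ (-a) = 0` makes the case `z = 0` automatic.

Modulus of continuity, for radii `s ≤ r ≤ 1/4` and `d ≥ r - s`: if `r² ≤ d`, both values lie in
`[0, (-log d)^(-a)]` by monotonicity. Otherwise `s ≥ 3r/4` and `r > √d`, so the mean value bound
`x^(-a) - y^(-a) ≤ a (y - x)` on `[1, ∞)` gives a difference `≲ a √d`, and
`√d (-log d)^a ≤ (2a)^a` since `|log d| d^t < 1/t`.

Failure of Hölder continuity: `u^(β/2) (-log u)^a → 0` as `u → 0⁺`, so
`φ(√u) - φ(0) = (-log u)^(-a)` eventually exceeds `C (√u)^β`. -/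

open Real Filter Topology Set

lemma rpow_neg_sub_rpow_neg_le {a x y : ℝ} (ha : 0 ≤ a) (hx : 1 ≤ x) (hxy : x ≤ y) :
    x ^ (-a) - y ^ (-a) ≤ a * (y - x) := by
  have hderiv : ∀ t ∈ interior (Ici (1 : ℝ)), deriv (fun t : ℝ => -t ^ (-a)) t ≤ a := by
    intro t ht
    rw [interior_Ici, mem_Ioi] at ht
    have : t ^ (-a - 1) ≤ 1 := rpow_le_one_of_one_le_of_nonpos ht.le (by linarith)
    rw [deriv.fun_neg, Real.deriv_rpow_const]
    nlinarith
  have hcont : ContinuousOn (fun t : ℝ => -t ^ (-a)) (Ici 1) := fun t ht =>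
    (continuousAt_rpow_const t (-a) (Or.inl (by simp at ht; linarith))).neg.continuousWithinAt
  have hdiff : DifferentiableOn ℝ (fun t : ℝ => -t ^ (-a)) (interior (Ici 1)) := fun t ht => by
    rw [interior_Ici, mem_Ioi] at ht
    exact (differentiableAt_rpow_const_of_ne (-a) (by linarith)).neg.differentiableWithinAt
  linarith [(convex_Ici 1).image_sub_le_mul_sub_of_deriv_le hcont hdiff hderiv x hx y
    (hx.trans hxy) hxy]

lemma neg_log_rpow_mul_rpow_le {a p d : ℝ} (ha : 0 < a) (hp : 0 < p) (hd0 : 0 < d)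
    (hd1 : d ≤ 1) : (-log d) ^ a * d ^ p ≤ (a / p) ^ a := by
  have hlog : 0 ≤ -log d := neg_nonneg.2 (log_nonpos hd0.le hd1)
  have hbound : -log d * d ^ (p / a) ≤ a / p := by
    have := abs_log_mul_self_rpow_lt d (p / a) hd0 hd1 (div_pos hp ha)
    rw [one_div_div, abs_lt] at this
    linarith
  calc (-log d) ^ a * d ^ p = (-log d * d ^ (p / a)) ^ a := by
        rw [mul_rpow hlog (by positivity), ← rpow_mul hd0.le, div_mul_cancel₀ p ha.ne']
    _ ≤ (a / p) ^ a := rpow_le_rpow (by positivity) hbound ha.le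

noncomputable def logPow (a u : ℝ) : ℝ := (-log u) ^ (-a)

lemma logPow_zero {a : ℝ} (ha : a ≠ 0) : logPow a 0 = 0 := by
  simp [logPow, ha]

lemma logPow_nonneg (a : ℝ) {u : ℝ} (hu0 : 0 ≤ u) (hu1 : u ≤ 1) : 0 ≤ logPow a u :=
  rpow_nonneg (neg_nonneg.2 (log_nonpos hu0 hu1)) _

lemma monotoneOn_logPow {a : ℝ} (ha : 0 < a) : MonotoneOn (logPow a) (Ico 0 1) := by
  rintro u ⟨hu0, -⟩ v ⟨-, hv1⟩ huv
  rcases hu0.eq_or_lt with rfl | hu0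
  · rw [logPow_zero ha.ne']
    exact logPow_nonneg a huv hv1.le
  exact rpow_le_rpow_of_nonpos (neg_pos.2 (log_neg (hu0.trans_le huv) hv1))
    (neg_le_neg (log_le_log hu0 huv)) (neg_nonpos.2 ha.le)

lemma tendsto_logPow_nhdsGT_zero {a : ℝ} (ha : 0 < a) :
    Tendsto (logPow a) (𝓝[>] 0) (𝓝 0) :=
  (tendsto_rpow_neg_atTop ha).comp (tendsto_neg_atBot_atTop.comp tendsto_log_nhdsGT_zero)

lemma continuousOn_logPow {a : ℝ} (ha : 0 < a) : ContinuousOn (logPow a) (Ico 0 1) := by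
  rintro u ⟨hu0, hu1⟩
  rcases hu0.eq_or_lt with rfl | hu0
  · have : ContinuousWithinAt (logPow a) (Ioi 0) 0 := by
      rw [ContinuousWithinAt, logPow_zero ha.ne']
      exact tendsto_logPow_nhdsGT_zero ha
    exact (continuousWithinAt_Ioi_iff_Ici.mp this).mono Ico_subset_Ici_self
  · exact ((continuous_neg.continuousAt.comp (continuousAt_log hu0.ne')).rpow_const
      (Or.inl (neg_ne_zero.2 (log_neg hu0 hu1).ne))).continuousWithinAt

lemma logPow_sq_sub_logPow_sq_le {a r s d : ℝ} (ha : 0 < a) (hs : 0 ≤ s) (hsr : s ≤ r)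
    (hr : r ≤ 1 / 4) (hd0 : 0 < d) (hd1 : d < 1) (hrs : r - s ≤ d) :
    logPow a (r ^ 2) - logPow a (s ^ 2) ≤ (1 + 3 * a * (2 * a) ^ a) / (-log d) ^ a := by
  have hlogd : 0 < -log d := neg_pos.2 (log_neg hd0 hd1)
  have hL : 0 < (-log d) ^ a := rpow_pos_of_pos hlogd a
  rcases le_or_gt (r ^ 2) d with hrd | hdr
  · have hr2 : logPow a (r ^ 2) ≤ logPow a d :=
      monotoneOn_logPow ha ⟨sq_nonneg r, by linarith⟩ ⟨hd0.le, hd1⟩ hrd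
    have hs2 : 0 ≤ logPow a (s ^ 2) := logPow_nonneg a (sq_nonneg s) (by nlinarith)
    have hd : logPow a d = 1 / (-log d) ^ a := by rw [logPow, rpow_neg hlogd.le, one_div]
    calc logPow a (r ^ 2) - logPow a (s ^ 2) ≤ 1 / (-log d) ^ a := by linarith
      _ ≤ _ := by gcongr; linarith [show 0 ≤ 3 * a * (2 * a) ^ a by positivity]
  have hr0 : 0 < r := by nlinarith
  have hs0 : 0 < s := by nlinarith
  have hsqrt : d / r ≤ √d := by
    have hlt : √d < r := by rwa [sqrt_lt' hr0]
    rw [div_le_iff₀ hr0]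
    nlinarith [mul_self_sqrt hd0.le, sqrt_nonneg d]
  have hX : 1 ≤ -log (r ^ 2) := by
    rw [log_pow]
    push_cast
    linarith [log_le_sub_one_of_pos hr0]
  have hXY : -log (r ^ 2) ≤ -log (s ^ 2) :=
    neg_le_neg (log_le_log (by positivity) (by gcongr))
  have hYX : -log (s ^ 2) - -log (r ^ 2) ≤ 8 / 3 * √d := by
    have hlog := log_le_sub_one_of_pos (div_pos hr0 hs0)
    rw [log_div hr0.ne' hs0.ne'] at hlog
    calc -log (s ^ 2) - -log (r ^ 2) = 2 * (log r - log s) := by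
          rw [log_pow, log_pow]; push_cast; ring
      _ ≤ 2 * (d / (3 / 4 * r)) := by
          gcongr
          calc log r - log s ≤ r / s - 1 := hlog
            _ = (r - s) / s := by field_simp
            _ ≤ d / (3 / 4 * r) := by gcongr; nlinarith
      _ = 8 / 3 * (d / r) := by field_simp; ring
      _ ≤ 8 / 3 * √d := by gcongr
  have hsqrt_log : √d * (-log d) ^ a ≤ (2 * a) ^ a := by
    have := neg_log_rpow_mul_rpow_le ha one_half_pos hd0 hd1.le
    rwa [show a / (1 / 2) = 2 * a by ring, mul_comm, ← sqrt_eq_rpow] at this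
  calc logPow a (r ^ 2) - logPow a (s ^ 2)
      ≤ a * (-log (s ^ 2) - -log (r ^ 2)) := rpow_neg_sub_rpow_neg_le ha.le hX hXY
    _ ≤ a * (8 / 3 * √d) := by gcongr
    _ ≤ (1 + 3 * a * (2 * a) ^ a) / (-log d) ^ a := by
        have hC : 0 ≤ a * (2 * a) ^ a := by positivity
        rw [le_div_iff₀ hL]
        calc a * (8 / 3 * √d) * (-log d) ^ a = 8 / 3 * a * (√d * (-log d) ^ a) := by ring
          _ ≤ 8 / 3 * a * (2 * a) ^ a := by gcongr
          _ ≤ 1 + 3 * a * (2 * a) ^ a := by linarith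

lemma abs_logPow_sq_sub_logPow_sq_le {a r s d : ℝ} (ha : 0 < a) (hr0 : 0 ≤ r) (hr : r ≤ 1 / 4)
    (hs0 : 0 ≤ s) (hs : s ≤ 1 / 4) (hd0 : 0 < d) (hd1 : d < 1) (hrs : |r - s| ≤ d) :
    |logPow a (r ^ 2) - logPow a (s ^ 2)| ≤ (1 + 3 * a * (2 * a) ^ a) / (-log d) ^ a := by
  wlog hsr : s ≤ r generalizing r s
  · rw [abs_sub_comm]
    exact this hs0 hs hr0 hr (by rwa [abs_sub_comm]) (le_of_not_ge hsr)
  have hmono : logPow a (s ^ 2) ≤ logPow a (r ^ 2) :=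
    monotoneOn_logPow ha ⟨sq_nonneg s, by nlinarith⟩ ⟨sq_nonneg r, by nlinarith⟩ (by gcongr)
  rw [abs_of_nonneg (sub_nonneg.2 hmono)]
  exact logPow_sq_sub_logPow_sq_le ha hs0 hsr hr hd0 hd1 ((le_abs_self _).trans hrs)

lemma tendsto_rpow_mul_neg_log_rpow_nhdsGT_zero {a b : ℝ} (ha : 0 < a) (hb : 0 < b) :
    Tendsto (fun u => u ^ b * (-log u) ^ a) (𝓝[>] 0) (𝓝 0) := by
  have h : Tendsto (fun u => (-(log u * u ^ (b / a))) ^ a) (𝓝[>] 0) (𝓝 0) := by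
    simpa [zero_rpow ha.ne'] using
      (tendsto_log_mul_rpow_nhdsGT_zero (div_pos hb ha)).neg.rpow_const (Or.inr ha.le)
  refine h.congr' ?_
  filter_upwards [Ioo_mem_nhdsGT one_pos] with u ⟨hu0, hu1⟩
  rw [← neg_mul, mul_rpow (neg_nonneg.2 (log_nonpos hu0.le hu1.le)) (by positivity),
    ← rpow_mul hu0.le, div_mul_cancel₀ b ha.ne', mul_comm]

lemma exists_rpow_lt_logPow_sq {a b C : ℝ} (ha : 0 < a) (hb : 0 < b) (hC : 0 < C) :
    ∃ r ∈ Ioc (0 : ℝ) (1 / 2), C * r ^ b < logPow a (r ^ 2) := by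
  have hsmall : ∀ᶠ u in 𝓝[>] 0, u ∈ Ioc (0 : ℝ) (1 / 4) := Ioc_mem_nhdsGT (by norm_num)
  obtain ⟨u, ⟨hu0, hu1⟩, hu⟩ := (hsmall.and
    ((tendsto_rpow_mul_neg_log_rpow_nhdsGT_zero ha (half_pos hb)).eventually_lt_const
      (inv_pos.2 hC))).exists
  have hlog : 0 < -log u := neg_pos.2 (log_neg hu0 (by linarith))
  refine ⟨√u, ⟨sqrt_pos.2 hu0, (sqrt_le_left (by norm_num)).2 (by linarith)⟩, ?_⟩
  rw [sq_sqrt hu0.le, sqrt_eq_rpow, ← rpow_mul hu0.le, one_div_mul_eq_div, logPow,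
    rpow_neg hlog.le, ← one_div, lt_div_iff₀ (by positivity)]
  calc C * u ^ (b / 2) * (-log u) ^ a = C * (u ^ (b / 2) * (-log u) ^ a) := by ring
    _ < C * C⁻¹ := by gcongr
    _ = 1 := mul_inv_cancel₀ hC.ne'

lemma ite_eq_logPow_norm_sq {a : ℝ} (ha : a ≠ 0) (z : ℂ) :
    (if z = 0 then 0 else (-log (‖z‖ ^ 2)) ^ (-a)) = logPow a (‖z‖ ^ 2) := by
  split_ifs with hz
  · simp [hz, logPow_zero ha]
  · rfl

/-- φ(z) = (-log|z|²)^{-a} (with φ(0)=0) is continuous on the disk of radius 1/2 with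
logarithmic modulus of continuity of order a, but is not Hölder continuous. -/
theorem stmt_6 (a : ℝ) (ha : 0 < a) :
    ContinuousOn (fun z : ℂ => if z = 0 then 0 else (-Real.log (‖z‖ ^ 2)) ^ (-a))
      {z : ℂ | ‖z‖ ≤ 1/2} ∧
    (∃ C > 0, ∀ z w : ℂ, ‖z‖ ≤ 1/4 → ‖w‖ ≤ 1/4 → z ≠ w →
      |(if z = 0 then 0 else (-Real.log (‖z‖ ^ 2)) ^ (-a)) -
        (if w = 0 then 0 else (-Real.log (‖w‖ ^ 2)) ^ (-a))| ≤
          C / |Real.log (‖z - w‖)| ^ a) ∧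
    ∀ β ∈ Set.Ioo (0:ℝ) 1, ∀ C > 0, ∃ z w : ℂ, ‖z‖ ≤ 1/2 ∧ ‖w‖ ≤ 1/2 ∧
      |(if z = 0 then 0 else (-Real.log (‖z‖ ^ 2)) ^ (-a)) -
        (if w = 0 then 0 else (-Real.log (‖w‖ ^ 2)) ^ (-a))| >
          C * ‖z - w‖ ^ β := by
  simp only [ite_eq_logPow_norm_sq ha.ne']
  refine ⟨?_, ⟨1 + 3 * a * (2 * a) ^ a, by positivity, fun z w hz hw hzw => ?_⟩,
    fun β hβ C hC => ?_⟩
  · refine (continuousOn_logPow ha).comp (by fun_prop) fun z hz => ⟨sq_nonneg _, ?_⟩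
    have : ‖z‖ ≤ 1 / 2 := hz
    nlinarith [norm_nonneg z]
  · have hd0 : 0 < ‖z - w‖ := norm_pos_iff.2 (sub_ne_zero.2 hzw)
    have hd1 : ‖z - w‖ < 1 := by linarith [norm_sub_le z w]
    rw [abs_of_neg (log_neg hd0 hd1)]
    exact abs_logPow_sq_sub_logPow_sq_le ha (norm_nonneg z) hz (norm_nonneg w) hw hd0 hd1
      (abs_norm_sub_norm_le z w)
  · obtain ⟨r, ⟨hr0, hr⟩, hlt⟩ := exists_rpow_lt_logPow_sq ha hβ.1 hC
    refine ⟨r, 0, ?_, by simp, ?_⟩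
    · simpa [abs_of_pos hr0] using hr
    · have hnonneg := logPow_nonneg a (sq_nonneg r) (by nlinarith)
      simpa [abs_of_pos hr0, logPow_zero ha.ne', abs_of_nonneg hnonneg] using hlt
end

section
/- Let u: B → ℝ be a bounded subharmonic function on a ball B = B(w₀, R) ⊂ ℝ^{2n} ≅ ℂⁿ and μ a Borel measure on B that is comparable to Lebesgue measure up to a factor (1 ± Cδ) with Cδ < 1/2. Then the mean value over B with respect to μ satisfies (1/μ(B)) ∫_B u dμ ≥ u(w₀) - C'·δ·osc_B(u) for a constant C' depending only on n and C. -/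
/-!
The μ-integral of the nonnegative function `u - inf u` is at least `1 - t` times its Lebesgue
integral, which by the sub-mean value property is at least `(1 - t) |B| (u w₀ - inf u)`, while
`μ B ≤ (1 + t) |B|`. Hence the μ-average of `u - inf u` is at least
`(1 - t) / (1 + t) (u w₀ - inf u) ≥ (1 - 2t) (u w₀ - inf u)`, and `u w₀ ≤ sup u` gives the
oscillation bound with `C' = 2C`.
-/

open MeasureTheory Metric Set
open scoped ENNReal

namespace MeasureTheory

variable {α : Type*} [MeasurableSpace α] {μ ν : Measure α} {s : Set α}

theorem Measure.restrict_le_restrict_of_forall_subset (hs : MeasurableSet s)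
    (h : ∀ t, MeasurableSet t → t ⊆ s → ν t ≤ μ t) : ν.restrict s ≤ μ.restrict s := by
  refine Measure.le_iff.2 fun t ht => ?_
  rw [Measure.restrict_apply ht, Measure.restrict_apply ht]
  exact h _ (ht.inter hs) inter_subset_right

theorem mul_integral_le_integral_of_smul_le {c : ℝ≥0∞} (hle : c • ν ≤ μ) {f : α → ℝ}
    (hf : 0 ≤ᵐ[μ] f) (hfi : Integrable f μ) : c.toReal * ∫ x, f x ∂ν ≤ ∫ x, f x ∂μ := by
  simpa only [integral_smul_measure, smul_eq_mul] using integral_mono_measure hle hf hfi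

theorem setAverage_sub_const (hs0 : μ s ≠ 0) (hs : μ s ≠ ∞) {f : α → ℝ}
    (hf : IntegrableOn f s μ) (c : ℝ) : ⨍ x in s, (f x - c) ∂μ = (⨍ x in s, f x ∂μ) - c := by
  have hμs : μ.real s ≠ 0 := ENNReal.toReal_ne_zero.2 ⟨hs0, hs⟩
  rw [setAverage_eq, setAverage_eq, integral_sub hf (integrableOn_const hs), setIntegral_const,
    smul_sub, smul_eq_mul, smul_eq_mul, smul_eq_mul, ← mul_assoc,
    inv_mul_cancel₀ hμs, one_mul]

theorem measure_ne_zero_of_smul_restrict_le {c : ℝ≥0∞} (hs : MeasurableSet s) (hc : c ≠ 0)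
    (hν0 : ν s ≠ 0) (hle : c • ν.restrict s ≤ μ.restrict s) : μ s ≠ 0 := by
  have := Measure.le_iff.1 hle s hs
  simp only [Measure.smul_apply, Measure.restrict_apply_self, smul_eq_mul] at this
  exact ((ENNReal.mul_pos hc hν0).trans_le this).ne'

theorem mul_setAverage_le_mul_setAverage {c d : ℝ≥0∞} (hs : MeasurableSet s) (hν0 : ν s ≠ 0)
    (hν : ν s ≠ ∞) (hc : c ≠ 0) (hd : d ≠ ∞) (hlow : c • ν.restrict s ≤ μ.restrict s)
    (hhigh : μ s ≤ d * ν s) {f : α → ℝ} (hf : ∀ x ∈ s, 0 ≤ f x) (hfi : IntegrableOn f s μ) :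
    c.toReal * ⨍ x in s, f x ∂ν ≤ d.toReal * ⨍ x in s, f x ∂μ := by
  have hdν : d * ν s ≠ ∞ := ENNReal.mul_ne_top hd hν
  have hμ0 : μ s ≠ 0 := measure_ne_zero_of_smul_restrict_le hs hc hν0 hlow
  have hN : 0 < ν.real s := ENNReal.toReal_pos hν0 hν
  have hM : 0 < μ.real s := ENNReal.toReal_pos hμ0 (hhigh.trans_lt hdν.lt_top).ne
  have hMN : μ.real s ≤ d.toReal * ν.real s := by
    have := ENNReal.toReal_mono hdν hhigh
    rwa [ENNReal.toReal_mul] at this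
  have hIμ : 0 ≤ ∫ x in s, f x ∂μ := setIntegral_nonneg hs hf
  have hI : c.toReal * ∫ x in s, f x ∂ν ≤ ∫ x in s, f x ∂μ :=
    mul_integral_le_integral_of_smul_le hlow (ae_restrict_of_forall_mem hs hf) hfi
  rw [setAverage_eq, setAverage_eq, smul_eq_mul, smul_eq_mul]
  calc c.toReal * ((ν.real s)⁻¹ * ∫ x in s, f x ∂ν)
      = (ν.real s)⁻¹ * (c.toReal * ∫ x in s, f x ∂ν) := by ring
    _ ≤ (ν.real s)⁻¹ * ∫ x in s, f x ∂μ := by gcongr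
    _ ≤ d.toReal * (μ.real s)⁻¹ * ∫ x in s, f x ∂μ := by
      gcongr
      rw [← div_eq_mul_inv, le_div_iff₀ hM, inv_mul_le_iff₀ hN]
      linarith
    _ = d.toReal * ((μ.real s)⁻¹ * ∫ x in s, f x ∂μ) := by ring

theorem sub_two_mul_le_setAverage (hs : MeasurableSet s) (hν0 : ν s ≠ 0) (hν : ν s ≠ ∞)
    {t : ℝ} (ht0 : 0 ≤ t) (ht1 : t < 1)
    (hlow : ENNReal.ofReal (1 - t) • ν.restrict s ≤ μ.restrict s)
    (hhigh : μ s ≤ ENNReal.ofReal (1 + t) * ν s) {u : α → ℝ} {m a : ℝ}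
    (hm : ∀ x ∈ s, m ≤ u x) (hma : m ≤ a) (hu : IntegrableOn u s μ)
    (ha : a ≤ ⨍ x in s, u x ∂ν) :
    a - 2 * t * (a - m) ≤ ⨍ x in s, u x ∂μ := by
  have hc : ENNReal.ofReal (1 - t) ≠ 0 := by simpa using ht1
  have hμ : μ s ≠ ∞ := (hhigh.trans_lt (ENNReal.mul_lt_top ENNReal.ofReal_lt_top hν.lt_top)).ne
  have hμ0 : μ s ≠ 0 := measure_ne_zero_of_smul_restrict_le hs hc hν0 hlow
  have huν : IntegrableOn u s ν :=
    (integrable_smul_measure hc ENNReal.ofReal_ne_top).1 (Integrable.mono_measure hu hlow)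
  have key := mul_setAverage_le_mul_setAverage hs hν0 hν hc ENNReal.ofReal_ne_top hlow hhigh
    (fun x hx => sub_nonneg.2 (hm x hx)) (hu.sub (integrableOn_const hμ))
  rw [setAverage_sub_const hν0 hν huν, setAverage_sub_const hμ0 hμ hu,
    ENNReal.toReal_ofReal (by linarith), ENNReal.toReal_ofReal (by linarith)] at key
  have hνa : (1 - t) * (a - m) ≤ (1 - t) * ((⨍ x in s, u x ∂ν) - m) := by gcongr
  -- `(1 + t) (1 - 2t) = 1 - t - 2t² ≤ 1 - t`
  have hμa : (1 + t) * ((1 - 2 * t) * (a - m)) ≤ (1 + t) * ((⨍ x in s, u x ∂μ) - m) := by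
    nlinarith [mul_nonneg (mul_nonneg ht0 ht0) (sub_nonneg.2 hma)]
  linarith [le_of_mul_le_mul_left hμa (by linarith)]

end MeasureTheory

theorem stmt_11_general (n : ℕ) (C : ℝ) (hC : 0 < C) :
    ∃ C' > 0, ∀ (δ R : ℝ), 0 < δ → C * δ < 1/2 → 0 < R →
      ∀ (w₀ : EuclideanSpace ℝ (Fin (2 * n))) (u : EuclideanSpace ℝ (Fin (2 * n)) → ℝ),
      (∃ M, ∀ x ∈ ball w₀ R, |u x| ≤ M) →
      (∀ r : ℝ, 0 < r → r ≤ R → u w₀ ≤ ⨍ x in ball w₀ r, u x) →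
      ∀ μ : Measure (EuclideanSpace ℝ (Fin (2 * n))),
      (∀ s : Set (EuclideanSpace ℝ (Fin (2 * n))), MeasurableSet s → s ⊆ ball w₀ R →
        ENNReal.ofReal (1 - C * δ) * volume s ≤ μ s ∧
          μ s ≤ ENNReal.ofReal (1 + C * δ) * volume s) →
      IntegrableOn u (ball w₀ R) μ →
      (μ (ball w₀ R)).toReal⁻¹ * ∫ x in ball w₀ R, u x ∂μ ≥
        u w₀ - C' * δ * (sSup (u '' ball w₀ R) - sInf (u '' ball w₀ R)) := by
  refine ⟨2 * C, by positivity, fun δ R hδ hCδ hR w₀ u hbdd hsub μ hμ hu => ?_⟩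
  obtain ⟨M, hM⟩ := hbdd
  have hw₀ : w₀ ∈ ball w₀ R := mem_ball_self hR
  have hbelow : BddBelow (u '' ball w₀ R) :=
    ⟨-M, by rintro _ ⟨x, hx, rfl⟩; exact neg_le_of_abs_le (hM x hx)⟩
  have habove : BddAbove (u '' ball w₀ R) :=
    ⟨M, by rintro _ ⟨x, hx, rfl⟩; exact le_of_abs_le (hM x hx)⟩
  have hlow :
      ENNReal.ofReal (1 - C * δ) • volume.restrict (ball w₀ R) ≤ μ.restrict (ball w₀ R) := by
    rw [← Measure.restrict_smul]
    exact Measure.restrict_le_restrict_of_forall_subset measurableSet_ball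
      fun s hs hsB => (hμ s hs hsB).1
  have key := sub_two_mul_le_setAverage measurableSet_ball (measure_ball_pos _ _ hR).ne'
    measure_ball_lt_top.ne (by positivity) (by linarith) hlow
    (hμ _ measurableSet_ball subset_rfl).2
    (fun x hx => csInf_le hbelow (mem_image_of_mem u hx))
    (csInf_le hbelow (mem_image_of_mem u hw₀)) hu (hsub R hR le_rfl)
  have hsup : u w₀ ≤ sSup (u '' ball w₀ R) := le_csSup habove (mem_image_of_mem u hw₀)
  rw [setAverage_eq, smul_eq_mul] at key
  refine le_trans ?_ key
  have : 0 ≤ C * δ := by positivity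
  nlinarith [mul_le_mul_of_nonneg_left hsup this]

/-- Perturbed mean-value inequality for a bounded subharmonic function (characterized by
the sub-mean value property on balls), with respect to a measure comparable to Lebesgue
measure up to factors 1 ± Cδ. -/
theorem stmt_11 (n : ℕ) (hn : 1 ≤ n) (C : ℝ) (hC : 0 < C) :
    ∃ C' > 0, ∀ (δ R : ℝ), 0 < δ → C * δ < 1/2 → 0 < R →
      ∀ (w₀ : EuclideanSpace ℝ (Fin (2 * n))) (u : EuclideanSpace ℝ (Fin (2 * n)) → ℝ),
      (∃ M, ∀ x ∈ ball w₀ R, |u x| ≤ M) →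
      (∀ r : ℝ, 0 < r → r ≤ R → u w₀ ≤ ⨍ x in ball w₀ r, u x) →
      ∀ μ : Measure (EuclideanSpace ℝ (Fin (2 * n))),
      (∀ s : Set (EuclideanSpace ℝ (Fin (2 * n))), MeasurableSet s → s ⊆ ball w₀ R →
        ENNReal.ofReal (1 - C * δ) * volume s ≤ μ s ∧
          μ s ≤ ENNReal.ofReal (1 + C * δ) * volume s) →
      IntegrableOn u (ball w₀ R) μ →
      (μ (ball w₀ R)).toReal⁻¹ * ∫ x in ball w₀ R, u x ∂μ ≥
        u w₀ - C' * δ * (sSup (u '' ball w₀ R) - sInf (u '' ball w₀ R)) :=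
  stmt_11_general n C hC
end
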